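/- Let a ∈ End(V) with dim V = m and f ∈ V*. The pair (a, f) is stable (no nonzero a-invariant subspace is contained in ker f) if and only if the functionals f, f∘a, f∘a², …, f∘a^{m−1} are linearly independent in V*. -/
import Mathlib

open Polynomial Module

/-- Cayley–Hamilton: if `f ∘ a^i` kills `v` for all `i < finrank`, it does for all `n`. -/
lemma key_all_pows {k V : Type*} [Field k] [AddCommGroup V] [Module k V]
    [FiniteDimensional k V] (a : Module.End k V) (f : V →ₗ[k] k) (v : V)
    (h : ∀ i < Module.finrank k V, f ((a ^ i) v) = 0) :
    ∀ n, f ((a ^ n) v) = 0 := by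
  set m := Module.finrank k V with hmdef
  rcases Nat.eq_zero_or_pos m with hm0 | hmpos
  · have : Subsingleton V := by
      rw [← Module.finrank_zero_iff (R := k)]; omega
    intro n
    have : (a ^ n) v = 0 := Subsingleton.elim _ _
    rw [this, map_zero]
  · -- q := X^m - charpoly a, so a^m = aeval a q, with natDegree q < m
    set p := LinearMap.charpoly a with hp
    have hmonic : p.Monic := LinearMap.charpoly_monic a
    have hdeg : p.natDegree = m := by
      rw [hp, hmdef]; exact a.charpoly_natDegree
    set q : k[X] := X ^ m - p with hq
    have hqdeg : q.natDegree < m := by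
      have h1 : (p - X ^ m).degree < p.degree := by
        apply Polynomial.degree_sub_lt
        · rw [degree_X_pow, Polynomial.degree_eq_natDegree hmonic.ne_zero, hdeg]
        · exact hmonic.ne_zero
        · simp [hmonic.leadingCoeff]
      have h2 : q.degree < (m : WithBot ℕ) := by
        rw [hq, ← neg_sub, degree_neg]
        calc (p - X ^ m).degree < p.degree := h1
          _ = (m : WithBot ℕ) := by
            rw [Polynomial.degree_eq_natDegree hmonic.ne_zero, hdeg]
      rcases eq_or_ne q 0 with h0 | h0
      · simpa [h0] using hmpos
      · exact (Polynomial.natDegree_lt_iff_degree_lt h0).2 h2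
    have ham : (a ^ m : Module.End k V) = Polynomial.aeval a q := by
      rw [hq, map_sub, LinearMap.aeval_self_charpoly, sub_zero, map_pow, aeval_X]
    have ham' : (a ^ m : Module.End k V)
        = ∑ i ∈ Finset.range m, q.coeff i • a ^ i := by
      rw [ham, Polynomial.aeval_eq_sum_range' hqdeg]
    intro n
    induction n using Nat.strong_induction_on with
    | _ n ih =>
      rcases lt_or_ge n m with hn | hn
      · exact h n hn
      · have : (a ^ n) v = (a ^ (n - m)) ((a ^ m) v) := by
          rw [← Module.End.mul_apply, ← pow_add, Nat.sub_add_cancel hn]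
        rw [this, ham']
        simp only [LinearMap.sum_apply, LinearMap.smul_apply, map_sum, map_smul]
        apply Finset.sum_eq_zero
        intro i hi
        simp only [Finset.mem_range] at hi
        have : (a ^ (n - m)) ((a ^ i) v) = (a ^ (n - m + i)) v := by
          rw [← Module.End.mul_apply, ← pow_add, add_comm]
        rw [this, ih (n - m + i) (by omega), smul_zero]

/-- A pair `(a, f)` is stable if no nonzero `a`-invariant subspace lies in `ker f`. -/
def IsStablePair {k V : Type*} [Field k] [AddCommGroup V] [Module k V]
    (a : Module.End k V) (f : V →ₗ[k] k) : Prop :=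
  ∀ U : Submodule k V, U.map a ≤ U → U ≤ LinearMap.ker f → U = ⊥

theorem stablePair_iff_linearIndependent
    {k V : Type*} [Field k] [AddCommGroup V] [Module k V] [FiniteDimensional k V]
    {m : ℕ} (hm : Module.finrank k V = m)
    (a : Module.End k V) (f : V →ₗ[k] k) :
    IsStablePair a f ↔
      LinearIndependent k (fun i : Fin m => f ∘ₗ ((a ^ (i : ℕ)) : V →ₗ[k] V)) := by
  classical
  set g : Fin m → Module.Dual k V := fun i => f ∘ₗ ((a ^ (i : ℕ)) : V →ₗ[k] V) with hg
  set W : Submodule k (Module.Dual k V) := Submodule.span k (Set.range g) with hW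
  set D : Submodule k V := W.dualCoannihilator with hD
  have hmemD : ∀ v : V, v ∈ D ↔ ∀ i : Fin m, f ((a ^ (i : ℕ)) v) = 0 := by
    intro v
    rw [hD, ← SetLike.mem_coe, hW, Submodule.coe_dualCoannihilator_span]
    constructor
    · intro hv i
      exact hv (g i) ⟨i, rfl⟩
    · rintro hv φ ⟨i, rfl⟩
      exact hv i
  have key2 : ∀ v : V, (∀ i : Fin m, f ((a ^ (i : ℕ)) v) = 0) →
      ∀ n : ℕ, f ((a ^ n) v) = 0 := by
    intro v hv
    apply key_all_pows
    intro i hi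
    rw [hm] at hi
    exact hv ⟨i, hi⟩
  have hsum : Module.finrank k W + Module.finrank k D = m := by
    rw [hD, ← hm]
    exact Subspace.finrank_add_finrank_dualCoannihilator_eq W
  constructor
  · intro hstable
    have hDbot : D = ⊥ := by
      apply hstable
      · rintro _ ⟨v, hv, rfl⟩
        have hv' : v ∈ D := hv
        rw [hmemD] at hv'
        have hv := hv'
        rw [hmemD]
        intro i
        have h1 := key2 v hv ((i : ℕ) + 1)
        have h2 : (a ^ (i : ℕ)) (a v) = (a ^ ((i : ℕ) + 1)) v := by
          rw [pow_succ, Module.End.mul_apply]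
        rw [h2]
        exact h1
      · intro v hv
        rw [LinearMap.mem_ker]
        have := key2 v ((hmemD v).1 hv) 0
        simpa using this
    rw [linearIndependent_iff_card_eq_finrank_span]
    have hD0 : Module.finrank k D = 0 := by rw [hDbot]; exact finrank_bot k V
    have : Set.finrank k (Set.range g) = Module.finrank k W := rfl
    rw [this, Fintype.card_fin]
    omega
  · intro hindep
    have hWrank : Module.finrank k W = m := by
      rw [linearIndependent_iff_card_eq_finrank_span] at hindep
      have : Set.finrank k (Set.range g) = Module.finrank k W := rfl
      rw [this, Fintype.card_fin] at hindep
      exact hindep.symm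
    have hDbot : D = ⊥ := by
      rw [← Submodule.finrank_eq_zero (R := k)]
      omega
    intro U hUinv hUker
    rw [eq_bot_iff]
    intro u hu
    have horbit : ∀ n : ℕ, (a ^ n) u ∈ U := by
      intro n
      induction n with
      | zero => simpa using hu
      | succ n ih =>
        have h2 : (a ^ (n + 1)) u = a ((a ^ n) u) := by
          rw [pow_succ', Module.End.mul_apply]
        rw [h2]
        exact hUinv ⟨_, ih, rfl⟩
    have humem : u ∈ D := by
      rw [hmemD]
      intro i
      have := hUker (horbit i)
      rwa [LinearMap.mem_ker] at this
    rw [hDbot] at humem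
    simpa using humem
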